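/- Let b ≥ 2 and let T be a tree rooted at a burned vertex s such that s has at most b+1 children and every other vertex has at most b+1 children. If every non-leaf vertex of T has exactly b+1 children (T is complete in this sense), then no firefighting strategy with b firefighters per time step can save all leaves of T; if some non-leaf vertex has at most b children, then such a strategy exists. Hence all leaves can be saved if and only if T is not complete. -/

import Mathlib

/-- `burnedSet G s φ t` is the set of vertices of `G` burned at time `t` in the firefighting
process where `s` is burned at time `0` and `φ t'` is the set of vertices protected at time
step `t'`: at each step the fire spreads from every burned vertex to each of its neighbors
that has not been protected at any time step so far. -/
def burnedSet {V : Type} (G : SimpleGraph V) (s : V) (φ : ℕ → Finset V) : ℕ → Set V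
  | 0 => {s}
  | t + 1 => burnedSet G s φ t ∪
      {w | (∃ v ∈ burnedSet G s φ t, G.Adj v w) ∧ ∀ t' ≤ t + 1, w ∉ φ t'}

/-- A strategy is valid with respect to budget `b` if no vertex is protected at time `0`,
at most `b` vertices are protected at each time step, and a vertex protected at time `t+1`
is not burned at time `t`. -/
def validStrategy {V : Type} (G : SimpleGraph V) (s : V) (b : ℕ) (φ : ℕ → Finset V) : Prop :=
  φ 0 = ∅ ∧ (∀ t, (φ t).card ≤ b) ∧ ∀ t v, v ∈ φ (t + 1) → v ∉ burnedSet G s φ t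

/-- A vertex is saved if it is never burned. -/
def savedBy {V : Type} (G : SimpleGraph V) (s : V) (φ : ℕ → Finset V) (v : V) : Prop :=
  ∀ t, v ∉ burnedSet G s φ t

/-!
If every non-leaf vertex has `b + 1` children and all leaves are saved, then no burned vertex is
a leaf, so the vertices burned at time `t` have `(b + 1) |B_t|` distinct children, each of which
is burned at time `t + 1` or among the at most `(t + 1) b` vertices protected so far. Hence
`|B_{t+1}| - 1 ≥ (b + 1) |B_t| - (t + 1) b`, so `|B_t| ≥ t + 1` for every `t`, which is impossible
in a finite tree.

Otherwise pick `v₀ = s` if `deg s ≤ b`, and else a non-leaf `v₀ ≠ s` with at most `b` children.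
Along the path `s = q₀, …, q_d = v₀`, protect at time `k + 1` the neighbours of `q_k` off the
path. There are at most `b` of them, the fire never leaves the path, and no vertex of the path
other than `s` and `v₀` is a leaf.
-/
open SimpleGraph Finset

variable {V : Type}

section Spread

variable {G : SimpleGraph V} {s : V} {φ : ℕ → Finset V}

lemma burnedSet_mono : Monotone (burnedSet G s φ) :=
  monotone_nat_of_le_succ fun _ _ hv => Or.inl hv

lemma start_mem_burnedSet (t : ℕ) : s ∈ burnedSet G s φ t :=
  burnedSet_mono (Nat.zero_le t) rfl

lemma mem_burnedSet_succ_or_protected {t : ℕ} {v w : V} (hv : v ∈ burnedSet G s φ t)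
    (hadj : G.Adj v w) : w ∈ burnedSet G s φ (t + 1) ∨ ∃ t' ≤ t + 1, w ∈ φ t' := by
  by_contra! h
  exact h.1 (Or.inr ⟨⟨v, hv, hadj⟩, h.2⟩)

lemma card_biUnion_range_le [DecidableEq V] {b : ℕ} (hφ : validStrategy G s b φ) (t : ℕ) :
    ((range (t + 1)).biUnion φ).card ≤ t * b := by
  induction t with
  | zero => simp [hφ.1]
  | succ t ih =>
    rw [range_add_one, biUnion_insert]
    calc _ ≤ (φ (t + 1)).card + ((range (t + 1)).biUnion φ).card := card_union_le _ _
      _ ≤ b + t * b := add_le_add (hφ.2.1 _) ih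
      _ = (t + 1) * b := by ring

end Spread

namespace SimpleGraph.IsTree

variable {G : SimpleGraph V} (hG : G.IsTree)

noncomputable def parent (s v : V) : V :=
  (hG.connected.exists_path_of_dist s v).choose.penultimate

lemma parent_root (s : V) : hG.parent s s = s := by
  rw [parent, Walk.eq_nil_iff_nil.2
    (Walk.isPath_iff_nil.1 (hG.connected.exists_path_of_dist s s).choose_spec.1)]
  rfl

lemma adj_parent {s v : V} (hv : v ≠ s) : G.Adj (hG.parent s v) v :=
  Walk.adj_penultimate (Walk.not_nil_of_ne hv.symm)

lemma parent_eq_or_parent_eq_of_adj (s : V) {u w : V} (h : G.Adj u w) :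
    hG.parent s w = u ∨ hG.parent s u = w := by
  have hp := (hG.connected.exists_path_of_dist s w).choose_spec.1
  have hq := (hG.connected.exists_path_of_dist s u).choose_spec.1
  by_cases hw : w ∈ (hG.connected.exists_path_of_dist s u).choose.support
  · exact Or.inr (hG.isAcyclic.eq_penultimate_of_adj_end hq h hw).symm
  · exact Or.inl (hG.isAcyclic.eq_penultimate_of_adj_end hp h.symm
      (hG.isAcyclic.mem_support_of_ne_mem_support_of_adj_of_isPath hp hq h.symm hw)).symm

variable [DecidableEq V] [G.LocallyFinite]

noncomputable def children (s v : V) : Finset V :=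
  (G.neighborFinset v).erase (hG.parent s v)

lemma mem_children {s v w : V} : w ∈ hG.children s v ↔ w ≠ hG.parent s v ∧ G.Adj v w := by
  rw [children, mem_erase, mem_neighborFinset]

lemma card_children_root (s : V) : (hG.children s s).card = G.degree s := by
  rw [children, hG.parent_root, erase_eq_of_notMem (G.notMem_neighborFinset_self s),
    card_neighborFinset_eq_degree]

lemma card_children_add_one {s v : V} (hv : v ≠ s) :
    (hG.children s v).card + 1 = G.degree v := by
  rw [children, card_erase_add_one ((mem_neighborFinset ..).2 (hG.adj_parent hv).symm),
    card_neighborFinset_eq_degree]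

lemma disjoint_children (s : V) {u v : V} (huv : u ≠ v) :
    Disjoint (hG.children s u) (hG.children s v) := by
  rw [Finset.disjoint_left]
  intro w hu hv
  rw [mem_children] at hu hv
  exact huv <| ((hG.parent_eq_or_parent_eq_of_adj s hu.2).resolve_right (Ne.symm hu.1)).symm.trans
    ((hG.parent_eq_or_parent_eq_of_adj s hv.2).resolve_right (Ne.symm hv.1))

lemma ne_root_of_mem_children {s v w : V} (hw : w ∈ hG.children s v) : w ≠ s := by
  rintro rfl
  rw [mem_children] at hw
  rcases hG.parent_eq_or_parent_eq_of_adj w hw.2 with h | h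
  · rw [hG.parent_root] at h
    exact G.loopless.irrefl w (h ▸ hw.2)
  · exact hw.1 h.symm

end SimpleGraph.IsTree

section Complete

variable [DecidableEq V] [Fintype V] {G : SimpleGraph V} [DecidableRel G.Adj] {s : V} {b : ℕ}
  {φ : ℕ → Finset V}

lemma ncard_burnedSet_mul_add_one_le (hG : G.IsTree) (hφ : validStrategy G s b φ) (t : ℕ)
    (hchildren : ∀ v ∈ burnedSet G s φ t, b + 1 ≤ (hG.children s v).card) :
    (burnedSet G s φ t).ncard * (b + 1) + 1 ≤ (burnedSet G s φ (t + 1)).ncard + (t + 1) * b := by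
  classical
  rw [Set.ncard_eq_toFinset_card', Set.ncard_eq_toFinset_card']
  set B := (burnedSet G s φ t).toFinset
  set B' := (burnedSet G s φ (t + 1)).toFinset
  have hs : s ∈ B' := Set.mem_toFinset.2 (start_mem_burnedSet _)
  have hsub : B.biUnion (hG.children s) ⊆ B'.erase s ∪ (range (t + 1 + 1)).biUnion φ := by
    intro w hw
    obtain ⟨v, hv, hwv⟩ := mem_biUnion.1 hw
    rcases mem_burnedSet_succ_or_protected (Set.mem_toFinset.1 hv) (hG.mem_children.1 hwv).2
      with hw' | ⟨t', ht', hwt'⟩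
    · exact mem_union_left _ (mem_erase.2 ⟨hG.ne_root_of_mem_children hwv, Set.mem_toFinset.2 hw'⟩)
    · exact mem_union_right _ (mem_biUnion.2 ⟨t', mem_range.2 (by omega), hwt'⟩)
  calc B.card * (b + 1) + 1
      ≤ ∑ v ∈ B, (hG.children s v).card + 1 := by
        gcongr
        exact card_nsmul_le_sum _ _ _ fun v hv => hchildren v (Set.mem_toFinset.1 hv)
    _ = (B.biUnion (hG.children s)).card + 1 := by
        rw [card_biUnion fun u _ v _ huv => hG.disjoint_children s huv]
    _ ≤ (B'.erase s).card + ((range (t + 1 + 1)).biUnion φ).card + 1 := by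
        gcongr
        exact (card_le_card hsub).trans (card_union_le _ _)
    _ ≤ B'.card + (t + 1) * b := by
        rw [card_erase_of_mem hs]
        have := card_biUnion_range_le hφ (t + 1)
        have := card_pos.2 ⟨s, hs⟩
        omega

lemma le_ncard_burnedSet (hG : G.IsTree) (hφ : validStrategy G s b φ)
    (hchildren : ∀ t, ∀ v ∈ burnedSet G s φ t, b + 1 ≤ (hG.children s v).card) (t : ℕ) :
    t + 1 ≤ (burnedSet G s φ t).ncard := by
  induction t with
  | zero => simp [burnedSet]
  | succ t ih =>
    have := ncard_burnedSet_mul_add_one_le hG hφ t (hchildren t)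
    nlinarith

lemma not_forall_savedBy_of_complete (hG : G.IsTree) (hs : G.degree s = b + 1)
    (hcomplete : ∀ v, v ≠ s → G.degree v ≠ 1 → G.degree v = b + 2)
    (hφ : validStrategy G s b φ) : ¬ ∀ v, G.degree v = 1 → v ≠ s → savedBy G s φ v := by
  intro hsaved
  have hchildren : ∀ t, ∀ v ∈ burnedSet G s φ t, b + 1 ≤ (hG.children s v).card := by
    intro t v hv
    by_cases hvs : v = s
    · rw [hvs, hG.card_children_root, hs]
    · have := hG.card_children_add_one hvs
      have := hcomplete v hvs fun h => hsaved v h hvs t hv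
      omega
  have := le_ncard_burnedSet hG hφ hchildren (Fintype.card V)
  have := (burnedSet G s φ (Fintype.card V)).ncard_le_card
  rw [Nat.card_eq_fintype_card] at this
  omega

end Complete

namespace SimpleGraph

variable {G : SimpleGraph V} {u v : V} {p : G.Walk u v}

lemma IsTree.length_eq_dist_of_isPath (hG : G.IsTree) (hp : p.IsPath) :
    p.length = G.dist u v := by
  obtain ⟨q, hq, hlen⟩ := hG.connected.exists_path_of_dist u v
  rw [← hlen, show p = q from
    congrArg Subtype.val ((hG.isAcyclic.subsingleton_path u v).elim ⟨p, hp⟩ ⟨q, hq⟩)]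

lemma IsTree.dist_getVert (hG : G.IsTree) (hp : p.IsPath) {k : ℕ} (hk : k ≤ p.length) :
    G.dist u (p.getVert k) = k := by
  rw [← hG.length_eq_dist_of_isPath (hp.take k), Walk.take_length]
  omega

lemma IsTree.getVert_dist_of_mem_support (hG : G.IsTree) (hp : p.IsPath) {w : V}
    (hw : w ∈ p.support) : p.getVert (G.dist u w) = w := by
  obtain ⟨k, rfl, hk⟩ := Walk.mem_support_iff_exists_getVert.1 hw
  rw [hG.dist_getVert hp hk]

lemma Walk.adj_getVert_pred {k : ℕ} (h0 : 0 < k) (hk : k ≤ p.length) :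
    G.Adj (p.getVert k) (p.getVert (k - 1)) := by
  have := p.adj_getVert_succ (i := k - 1) (by omega)
  rwa [Nat.sub_add_cancel h0, adj_comm] at this

lemma Walk.IsPath.getVert_ne_start (hp : p.IsPath) {k : ℕ} (h0 : 0 < k) (hk : k ≤ p.length) :
    p.getVert k ≠ u := fun h => by
  have := hp.getVert_injOn (by simpa using hk) (by simp) (h.trans p.getVert_zero.symm)
  omega

variable [DecidableEq V] [G.LocallyFinite]

lemma card_neighborFinset_getVert_sdiff_add_le {k : ℕ} {A : Finset V}
    (hA : ∀ a ∈ A, a ∈ p.support ∧ G.Adj (p.getVert k) a) :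
    (G.neighborFinset (p.getVert k) \ p.support.toFinset).card + A.card ≤
      G.degree (p.getVert k) := by
  have hsub : A ⊆ G.neighborFinset (p.getVert k) ∩ p.support.toFinset := fun a ha => by
    simpa [(hA a ha).1] using (hA a ha).2
  have := card_sdiff_add_card_inter (G.neighborFinset (p.getVert k)) p.support.toFinset
  have := card_le_card hsub
  rw [← card_neighborFinset_eq_degree]
  omega

lemma Walk.IsPath.card_neighborFinset_getVert_sdiff_add_two_le (hp : p.IsPath) {k : ℕ}
    (h0 : 0 < k) (hk : k < p.length) :
    (G.neighborFinset (p.getVert k) \ p.support.toFinset).card + 2 ≤ G.degree (p.getVert k) := by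
  have hne : p.getVert (k - 1) ≠ p.getVert (k + 1) := fun h => by
    have := hp.getVert_injOn (by simp; omega) (by simp; omega) h
    omega
  simpa [card_pair hne] using card_neighborFinset_getVert_sdiff_add_le
    (A := {p.getVert (k - 1), p.getVert (k + 1)}) (by
      simp only [mem_insert, mem_singleton, forall_eq_or_imp, forall_eq]
      exact ⟨⟨p.getVert_mem_support _, p.adj_getVert_pred h0 hk.le⟩,
        p.getVert_mem_support _, p.adj_getVert_succ hk⟩)

lemma Walk.IsPath.two_le_degree_of_mem_support (hp : p.IsPath) {w : V} (hw : w ∈ p.support)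
    (hwu : w ≠ u) (hwv : w ≠ v) : 2 ≤ G.degree w := by
  obtain ⟨k, rfl, hk⟩ := Walk.mem_support_iff_exists_getVert.1 hw
  have h0 : 0 < k := Nat.pos_of_ne_zero fun h => hwu (h ▸ p.getVert_zero)
  have hk' : k < p.length := lt_of_le_of_ne hk fun h => hwv (h ▸ p.getVert_length)
  have := hp.card_neighborFinset_getVert_sdiff_add_two_le h0 hk'
  omega

end SimpleGraph

section PathStrategy

variable [DecidableEq V] {G : SimpleGraph V} [G.LocallyFinite] {s v : V} {p : G.Walk s v}

def pathStrategy (p : G.Walk s v) : ℕ → Finset V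
  | 0 => ∅
  | k + 1 => G.neighborFinset (p.getVert k) \ p.support.toFinset

/- The fire crosses one edge per step, so a vertex of the path at distance `k` from `s` cannot burn
before time `k`, and its neighbours off the path are protected at time `k + 1`. -/
lemma burnedSet_pathStrategy_subset (hG : G.IsTree) (hp : p.IsPath) (t : ℕ) :
    burnedSet G s (pathStrategy p) t ⊆ {w | w ∈ p.support ∧ G.dist s w ≤ t} := by
  induction t with
  | zero =>
    intro w hw
    rw [Set.mem_singleton_iff.1 hw]
    exact ⟨p.start_mem_support, by simp⟩
  | succ t ih =>
    rintro w (hw | ⟨⟨x, hx, hxw⟩, hunprotected⟩)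
    · exact ⟨(ih hw).1, Nat.le_succ_of_le (ih hw).2⟩
    obtain ⟨hxp, hxt⟩ := ih hx
    have hwp : w ∈ p.support := by
      by_contra hwp
      apply hunprotected (G.dist s x + 1) (by omega)
      simp [pathStrategy, hG.getVert_dist_of_mem_support hp hxp, hxw, hwp]
    refine ⟨hwp, ?_⟩
    rcases hG.dist_eq_dist_add_one_of_adj s hxw with h | h <;> omega

lemma validStrategy_pathStrategy (hG : G.IsTree) (hp : p.IsPath) {b : ℕ}
    (hbudget : ∀ k, (G.neighborFinset (p.getVert k) \ p.support.toFinset).card ≤ b) :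
    validStrategy G s b (pathStrategy p) := by
  refine ⟨rfl, fun | 0 => by simp [pathStrategy] | k + 1 => hbudget k, fun t w hw hwB => ?_⟩
  exact (mem_sdiff.1 hw).2 (List.mem_toFinset.2 (burnedSet_pathStrategy_subset hG hp t hwB).1)

lemma savedBy_pathStrategy (hG : G.IsTree) (hp : p.IsPath) {w : V} (hw : w ∉ p.support) :
    savedBy G s (pathStrategy p) w :=
  fun t hwB => hw (burnedSet_pathStrategy_subset hG hp t hwB).1

lemma card_neighborFinset_getVert_sdiff_le (hp : p.IsPath) {b : ℕ} (hs : G.degree s ≤ b + 1)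
    (hmax : ∀ w, w ≠ s → G.degree w ≤ b + 2) (hv : v ≠ s → G.degree v ≤ b + 1)
    (hvs : v = s → G.degree s ≤ b) (k : ℕ) :
    (G.neighborFinset (p.getVert k) \ p.support.toFinset).card ≤ b := by
  wlog hk : k ≤ p.length generalizing k
  · have hv : p.getVert k = p.getVert p.length := by
      rw [p.getVert_of_length_le (le_of_not_ge hk), p.getVert_length]
    rw [hv]
    exact this _ le_rfl
  rcases Nat.eq_zero_or_pos k with rfl | h0
  · rw [p.getVert_zero]
    rcases Nat.eq_zero_or_pos p.length with hd | hd
    · exact (card_le_card sdiff_subset).trans <|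
        (G.card_neighborFinset_eq_degree s).trans_le (hvs (Walk.eq_of_length_eq_zero hd).symm)
    · have := card_neighborFinset_getVert_sdiff_add_le (p := p) (k := 0) (A := {p.getVert 1})
        (by simp only [mem_singleton, forall_eq]
            exact ⟨p.getVert_mem_support 1, p.adj_getVert_succ hd⟩)
      rw [p.getVert_zero, card_singleton] at this
      omega
  rcases lt_or_eq_of_le hk with hk | rfl
  · have := hp.card_neighborFinset_getVert_sdiff_add_two_le h0 hk
    have := hmax _ (hp.getVert_ne_start h0 hk.le)
    omega
  · have := card_neighborFinset_getVert_sdiff_add_le (p := p) (k := p.length)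
      (A := {p.getVert (p.length - 1)})
      (by simp only [mem_singleton, forall_eq]
          exact ⟨p.getVert_mem_support _, p.adj_getVert_pred h0 le_rfl⟩)
    rw [p.getVert_length, card_singleton] at this
    rw [p.getVert_length]
    have := hv (p.getVert_length ▸ hp.getVert_ne_start h0 le_rfl)
    omega

end PathStrategy

theorem stmt3_general {V : Type} [Fintype V] [DecidableEq V] (G : SimpleGraph V) [DecidableRel G.Adj]
    (hG : G.IsTree) (s : V) (b : ℕ)
    (hs : G.degree s ≤ b + 1) (hmax : ∀ v, v ≠ s → G.degree v ≤ b + 2) :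
    (∃ φ : ℕ → Finset V, validStrategy G s b φ ∧
        ∀ v, G.degree v = 1 → v ≠ s → savedBy G s φ v) ↔
      ¬(G.degree s = b + 1 ∧ ∀ v, v ≠ s → G.degree v ≠ 1 → G.degree v = b + 2) := by
  refine ⟨fun ⟨φ, hφ, hsaved⟩ ⟨hdeg, hcomplete⟩ =>
    not_forall_savedBy_of_complete hG hdeg hcomplete hφ hsaved, fun hnc => ?_⟩
  obtain ⟨v, hv, hvs⟩ : ∃ v, (v ≠ s → G.degree v ≠ 1 ∧ G.degree v ≤ b + 1) ∧
      (v = s → G.degree s ≤ b) := by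
    by_cases hsb : G.degree s ≤ b
    · exact ⟨s, fun h => absurd rfl h, fun _ => hsb⟩
    obtain ⟨v, hvs, hv1, hv⟩ : ∃ v, v ≠ s ∧ G.degree v ≠ 1 ∧ G.degree v ≠ b + 2 := by
      by_contra! h
      exact hnc ⟨by omega, h⟩
    exact ⟨v, fun _ => ⟨hv1, by have := hmax v hvs; omega⟩, fun h => absurd h hvs⟩
  obtain ⟨p, hp, -⟩ := hG.connected.exists_path_of_dist s v
  refine ⟨pathStrategy p, validStrategy_pathStrategy hG hp
    (card_neighborFinset_getVert_sdiff_le hp hs hmax (fun h => (hv h).2) hvs),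
    fun w hw hws => savedBy_pathStrategy hG hp fun hwp => ?_⟩
  obtain rfl | hwv := eq_or_ne w v
  · exact (hv hws).1 hw
  · have := hp.two_le_degree_of_mem_support hwp hws hwv
    omega

/-- Let `b ≥ 2` and let `T` be a tree rooted at the burned vertex `s` such that `s` has at
most `b+1` children (degree at most `b+1`) and every other vertex has at most `b+1`
children (degree at most `b+2`). The leaves of `T` are the vertices of degree `1` other
than `s`. Then all leaves can be saved by a valid budget-`b` strategy if and only if `T` is
not complete, where `T` is complete when every non-leaf vertex has exactly `b+1` children,
i.e. `deg s = b+1` and every non-leaf vertex `v ≠ s` has `deg v = b+2`. -/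
theorem stmt3 {V : Type} [Fintype V] [DecidableEq V] (G : SimpleGraph V) [DecidableRel G.Adj]
    (hG : G.IsTree) (s : V) (b : ℕ) (hb : 2 ≤ b)
    (hs : G.degree s ≤ b + 1) (hmax : ∀ v, v ≠ s → G.degree v ≤ b + 2) :
    (∃ φ : ℕ → Finset V, validStrategy G s b φ ∧
        ∀ v, G.degree v = 1 → v ≠ s → savedBy G s φ v) ↔
      ¬(G.degree s = b + 1 ∧ ∀ v, v ≠ s → G.degree v ≠ 1 → G.degree v = b + 2) :=
  stmt3_general G hG s b hs hmax
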